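/- Consider the simplified coevolutionary model (A = W, α = 0, γ = 0) with homogeneous λ, β ∈ (0,1), W symmetric, irreducible, row-stochastic with w_{ii} > 0 for all i. Suppose there exists a partition (V_p, V_n) of the agents into two nonempty disjoint sets and a scalar d > 1/2 such that Σ_{j∈V_p} w_{ij} = d for every i ∈ V_p and Σ_{j∈V_n} w_{ij} = d for every i ∈ V_n. Then there exists a polarized equilibrium z* = (x*, y*) with respect to (V_p, V_n) of the form y_i* = y⁺ for all i ∈ V_p and y_j* = y⁻ for all j ∈ V_n, where y⁺ = λ/(1 - (1-λ)(2d-1)) and y⁻ = -λ/(1 - (1-λ)(2d-1)). -/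
import Mathlib


open Finset Matrix Filter

/-- The quantity `δ_i(z)` in the simplified model (`A = W`, `α = 0`, `γ = 0`). -/
noncomputable def sDelta {n : ℕ} (w : Fin n → Fin n → ℝ) (lam β : ℝ)
    (x y : Fin n → ℝ) (i : Fin n) : ℝ :=
  2 * lam * β * (1 - lam) * (∑ j, w i j * y j) + (1 - β) * lam * (∑ j, w i j * x j)

/-- `S(d; x_i)`: `+1` if `d > 0`, `-1` if `d < 0`, and `x_i` if `d = 0`. -/
noncomputable def brS (d xi : ℝ) : ℝ := if 0 < d then 1 else if d < 0 then -1 else xi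

/-- A state `(x, y)` is an equilibrium of the simplified coevolutionary model if applying
the update rule to any agent leaves the state unchanged. -/
noncomputable def isEquilibrium {n : ℕ} (w : Fin n → Fin n → ℝ) (lam β : ℝ)
    (x y : Fin n → ℝ) : Prop :=
  ∀ i, brS (sDelta w lam β x y i) (x i) = x i ∧
    (1 - lam) * (∑ j, w i j * y j) + lam * brS (sDelta w lam β x y i) (x i) = y i

/-- A state `(x, y)` is polarized with respect to the partition `(Vp, Vn)`. -/
def Polarized {n : ℕ} (Vp Vn : Finset (Fin n)) (x y : Fin n → ℝ) : Prop :=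
  (∀ i ∈ Vp, x i = 1 ∧ 0 < y i) ∧ (∀ i ∈ Vn, x i = -1 ∧ y i < 0)

/-- A nonnegative matrix (given as a function) is irreducible if for every pair of indices
some power of the matrix has a positive entry there. -/
def FunIrreducible {n : ℕ} (W : Fin n → Fin n → ℝ) : Prop :=
  ∀ i j, ∃ k : ℕ, 0 < ((Matrix.of W) ^ k) i j

theorem stmt18 {n : ℕ} (hn : 2 ≤ n) (w : Fin n → Fin n → ℝ) (lam β : ℝ)
    (hw : ∀ i j, 0 ≤ w i j) (hwrow : ∀ i, ∑ j, w i j = 1)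
    (hwsymm : ∀ i j, w i j = w j i) (hwirr : FunIrreducible w)
    (hwdiag : ∀ i, 0 < w i i)
    (hlam : lam ∈ Set.Ioo (0 : ℝ) 1) (hβ : β ∈ Set.Ioo (0 : ℝ) 1)
    -- a partition of the agents into two nonempty disjoint sets
    (Vp Vn : Finset (Fin n)) (hdisj : Disjoint Vp Vn) (hunion : Vp ∪ Vn = Finset.univ)
    (hVp : Vp.Nonempty) (hVn : Vn.Nonempty)
    -- uniform in-group influence
    (d : ℝ) (hd : 1 / 2 < d)
    (hup : ∀ i ∈ Vp, (∑ j ∈ Vp, w i j) = d) (hun : ∀ i ∈ Vn, (∑ j ∈ Vn, w i j) = d) :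
    ∃ xstar ystar : Fin n → ℝ,
      isEquilibrium w lam β xstar ystar ∧ Polarized Vp Vn xstar ystar ∧
      (∀ i ∈ Vp, ystar i = lam / (1 - (1 - lam) * (2 * d - 1))) ∧
      (∀ i ∈ Vn, ystar i = -(lam / (1 - (1 - lam) * (2 * d - 1)))) := by
  obtain ⟨hl0, hl1⟩ := hlam
  obtain ⟨hb0, hb1⟩ := hβ
  obtain ⟨i0, hi0⟩ := hVp
  have hd1 : d ≤ 1 := by
    rw [← hup i0 hi0, ← hwrow i0]
    exact Finset.sum_le_sum_of_subset_of_nonneg (Finset.subset_univ _) (fun j _ _ => hw i0 j)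
  have hD : 0 < 1 - (1 - lam) * (2 * d - 1) := by nlinarith
  set c : ℝ := lam / (1 - (1 - lam) * (2 * d - 1)) with hc
  have hcpos : 0 < c := div_pos hl0 hD
  have hcfix : (1 - lam) * (c * (2 * d - 1)) + lam = c := by
    rw [hc]; field_simp; ring
  have h2d : (0:ℝ) < 2 * d - 1 := by linarith
  have hP : 0 < (2 * lam * β * (1 - lam) * c + (1 - β) * lam) * (2 * d - 1) := by
    have f1 : 0 < 2 * lam * β * (1 - lam) * c :=
      mul_pos (mul_pos (mul_pos (by linarith : (0:ℝ) < 2 * lam) hb0)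
        (by linarith : (0:ℝ) < 1 - lam)) hcpos
    have f2 : 0 < (1 - β) * lam := mul_pos (by linarith) hl0
    exact mul_pos (by linarith) h2d
  have hsplit : ∀ i, ∑ j ∈ Vp, w i j + ∑ j ∈ Vn, w i j = 1 := by
    intro i; rw [← Finset.sum_union hdisj, hunion]; exact hwrow i
  have hx : ∀ i, (∑ j, w i j * (if j ∈ Vp then (1:ℝ) else -1))
      = (∑ j ∈ Vp, w i j) - (∑ j ∈ Vn, w i j) := by
    intro i
    rw [← hunion, Finset.sum_union hdisj]
    have h1 : ∑ j ∈ Vp, w i j * (if j ∈ Vp then (1:ℝ) else -1) = ∑ j ∈ Vp, w i j :=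
      Finset.sum_congr rfl (fun j hj => by rw [if_pos hj, mul_one])
    have h2 : ∑ j ∈ Vn, w i j * (if j ∈ Vp then (1:ℝ) else -1) = -∑ j ∈ Vn, w i j := by
      rw [← Finset.sum_neg_distrib]
      exact Finset.sum_congr rfl (fun j hj => by
        rw [if_neg (Finset.disjoint_right.mp hdisj hj)]; ring)
    rw [h1, h2]; ring
  have hy : ∀ i, (∑ j, w i j * (if j ∈ Vp then c else -c))
      = c * ((∑ j ∈ Vp, w i j) - (∑ j ∈ Vn, w i j)) := by
    intro i
    rw [← hx i, Finset.mul_sum]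
    exact Finset.sum_congr rfl (fun j _ => by split <;> ring)
  refine ⟨fun i => if i ∈ Vp then 1 else -1, fun i => if i ∈ Vp then c else -c, ?_, ?_, ?_, ?_⟩
  · intro i
    by_cases hi : i ∈ Vp
    · have hip : ∑ j ∈ Vp, w i j = d := hup i hi
      have hin : ∑ j ∈ Vn, w i j = 1 - d := by linarith [hsplit i]
      have hδ : 0 < sDelta w lam β (fun i => if i ∈ Vp then (1:ℝ) else -1)
          (fun i => if i ∈ Vp then c else -c) i := by
        unfold sDelta
        rw [hx i, hy i, hip, hin]
        nlinarith [hP]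
      have hS : ∀ xi : ℝ, brS (sDelta w lam β (fun i => if i ∈ Vp then (1:ℝ) else -1)
          (fun i => if i ∈ Vp then c else -c) i) xi = 1 := fun xi => by
        rw [brS, if_pos hδ]
      refine ⟨by simp only [hS, if_pos hi], ?_⟩
      simp only [hS, hy i, hip, hin, if_pos hi]
      calc (1 - lam) * (c * (d - (1 - d))) + lam * 1
          = (1 - lam) * (c * (2 * d - 1)) + lam := by ring
        _ = c := hcfix
    · have hiN : i ∈ Vn := by
        have := Finset.mem_univ i
        rw [← hunion, Finset.mem_union] at this
        tauto
      have hin : ∑ j ∈ Vn, w i j = d := hun i hiN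
      have hip : ∑ j ∈ Vp, w i j = 1 - d := by linarith [hsplit i]
      have hδ : sDelta w lam β (fun i => if i ∈ Vp then (1:ℝ) else -1)
          (fun i => if i ∈ Vp then c else -c) i < 0 := by
        unfold sDelta
        rw [hx i, hy i, hip, hin]
        nlinarith [hP]
      have hS : ∀ xi : ℝ, brS (sDelta w lam β (fun i => if i ∈ Vp then (1:ℝ) else -1)
          (fun i => if i ∈ Vp then c else -c) i) xi = -1 := fun xi => by
        rw [brS, if_neg (by linarith), if_pos hδ]
      refine ⟨by simp only [hS, if_neg hi], ?_⟩
      simp only [hS, hy i, hip, hin, if_neg hi]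
      have : (1 - lam) * (c * ((1 - d) - d)) + lam * (-1)
          = -((1 - lam) * (c * (2 * d - 1)) + lam) := by ring
      rw [this, hcfix]
  · constructor
    · intro i hi
      refine ⟨if_pos hi, ?_⟩
      simp only [if_pos hi]; exact hcpos
    · intro i hi
      have hi' : i ∉ Vp := Finset.disjoint_right.mp hdisj hi
      refine ⟨if_neg hi', ?_⟩
      simp only [if_neg hi']; linarith
  · intro i hi; simp only [if_pos hi, hc]
  · intro i hi; simp only [if_neg (Finset.disjoint_right.mp hdisj hi), hc]
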